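/- Let Q be a finite quiver without oriented cycles and let Z ⊆ ℤ^{Q_1} be the set of vectors associated to primitive nonoriented cycles in Q. Then the ideal I_{C_Q} ⊆ k[S_α : α ∈ Q_1], defined as the kernel of the k-algebra homomorphism k[S_α] → k[T_i, T_i^{-1} : i ∈ Q_0] sending S_α to T_{t(α)} T_{s(α)}^{-1}, is generated by the binomials S^{u⁺} - S^{u⁻} for u ∈ Z. -/

import Mathlib

namespace QuiverCycles8

variable {V A : Type} (s t : A → V)

/-- Source of an edge of the double quiver. -/
def esrc : A ⊕ A → V
  | Sum.inl a => s a
  | Sum.inr a => t a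

/-- Target of an edge of the double quiver. -/
def etgt : A ⊕ A → V
  | Sum.inl a => t a
  | Sum.inr a => s a

/-- Formal inverse of an edge of the double quiver. -/
def erev : A ⊕ A → A ⊕ A
  | Sum.inl a => Sum.inr a
  | Sum.inr a => Sum.inl a

/-- `e :: l` is a nonoriented cycle. -/
def IsNonorientedCycle (e : A ⊕ A) (l : List (A ⊕ A)) : Prop :=
  List.Chain (fun f g => etgt s t f = esrc s t g ∧ g ≠ erev f) e l ∧
    etgt s t ((e :: l).getLast (List.cons_ne_nil e l)) = esrc s t e ∧
    (l ≠ [] → e ≠ erev ((e :: l).getLast (List.cons_ne_nil e l)))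

/-- A nonoriented cycle is primitive iff it visits every vertex at most once. -/
def IsPrimitive (e : A ⊕ A) (l : List (A ⊕ A)) : Prop :=
  ((e :: l).map (esrc s t)).Nodup

/-- The vector in `ℤ^{Q_1}` associated with a nonoriented cycle. -/
def cycVec [DecidableEq A] (c : List (A ⊕ A)) : A → ℤ :=
  fun a => (c.count (Sum.inl a) : ℤ) - (c.count (Sum.inr a) : ℤ)

/-- The binomial `S^{u⁺} - S^{u⁻}` associated with `u ∈ ℤ^{Q_1}`. -/
noncomputable def binomial (k : Type) [Field k] [Fintype A] (u : A → ℤ) :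
    MvPolynomial A k :=
  (∏ a, MvPolynomial.X a ^ (u a).toNat) - ∏ a, MvPolynomial.X a ^ (-(u a)).toNat

end QuiverCycles8

/-!
The map is `mapDomain` along the degree map `v ↦ U v` on exponents, so its kernel is spanned by
differences of monomials of equal degree, hence by the binomials `S^{w⁺} - S^{w⁻}` with `U w = 0`
(Sturmfels). Such a `w` is a circulation: on the double quiver, where a reversed arrow carries
weight `-w`, every edge of positive weight is followed by another one. Choosing one positive edge
out of each vertex that has one gives a self-map of the finite vertex set, and a periodic orbit of
it is a primitive nonoriented cycle `c` conformal to `w` (`c⁺ ≤ w⁺`, `c⁻ ≤ w⁻`). Then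
`S^{w⁺} - S^{w⁻} = S^{(w-c)⁺} (S^{c⁺} - S^{c⁻}) + S^{c⁻} (S^{(w-c)⁺} - S^{(w-c)⁻})`,
and induction on `∑ |w_α|` concludes.
-/

open MvPolynomial

-- `List.count` in `cycVec` uses the derived `BEq` on sums, which core does not prove lawful.
instance Sum.instLawfulBEq {α β : Type*} [BEq α] [LawfulBEq α] [BEq β] [LawfulBEq β] :
    LawfulBEq (α ⊕ β) where
  rfl {x} := by
    cases x with
    | inl a => exact beq_self_eq_true a
    | inr b => exact beq_self_eq_true b
  eq_of_beq {x y} h := by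
    cases x <;> cases y <;> first
      | exact congrArg _ (eq_of_beq h) | exact absurd h Bool.false_ne_true

theorem List.cons_map_range_eq_map_range_succ {α : Type*} (x : ℕ → α) (m : ℕ) :
    x 0 :: (List.range m).map (fun i => x (i + 1)) = (List.range (m + 1)).map x := by
  rw [List.range_succ_eq_map, List.map_cons, List.map_map]
  rfl

theorem Function.exists_iterate_mem_periodicPts {α : Type*} [Finite α] (f : α → α) (x : α) :
    ∃ i, f^[i] x ∈ Function.periodicPts f := by
  obtain ⟨i, j, hij, heq⟩ := Finite.exists_ne_map_eq_of_infinite (fun n => f^[n] x)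
  wlog hlt : i < j generalizing i j
  · exact this j i hij.symm heq.symm (by omega)
  refine ⟨i, Function.mk_mem_periodicPts (Nat.sub_pos_of_lt hlt) ?_⟩
  rw [Function.IsPeriodicPt, Function.IsFixedPt, ← Function.iterate_add_apply,
    Nat.sub_add_cancel hlt.le]
  exact heq.symm

theorem AddMonoidAlgebra.ker_mapDomainLinearMap_le_span {k M N : Type*} [Ring k] [Nonempty M]
    (f : M → N) :
    LinearMap.ker (mapDomainLinearMap k k f) ≤
      Submodule.span k {q | ∃ x y, f x = f y ∧ q = single x 1 - single y 1} := by
  intro p hp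
  -- `r` factors through `f`, so it kills the kernel; `single x c - single (r x) c` is in the span.
  set r : M → M := Function.invFun f ∘ f
  have hspan : ∀ q : AddMonoidAlgebra k M, q - mapDomainLinearMap k k r q ∈
      Submodule.span k {q | ∃ x y, f x = f y ∧ q = single x 1 - single y 1} := by
    intro q
    induction q using induction_linear with
    | zero => simp
    | add q q' hq hq' =>
      rw [map_add, add_sub_add_comm]
      exact add_mem hq hq'
    | single x c =>
      have hx : f x = f (r x) := (Function.invFun_eq ⟨x, rfl⟩).symm
      rw [mapDomainLinearMap_single, ← mul_one c, ← smul_eq_mul, ← smul_single, ← smul_single,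
        ← smul_sub]
      exact Submodule.smul_mem _ _ (Submodule.subset_span ⟨x, r x, hx, rfl⟩)
  have hr : mapDomainLinearMap k k r p = 0 := by
    rw [mapDomainLinearMap_comp, LinearMap.comp_apply, LinearMap.mem_ker.1 hp, map_zero]
  simpa [hr] using hspan p

namespace QuiverCycles8

section Binomial

variable {A : Type} {G : Type*}

theorem aeval_single_eq_mapDomainAlgHom {R : Type*} [CommSemiring R] [AddCommMonoid G]
    (g : A → G) :
    aeval (fun a => AddMonoidAlgebra.single (g a) (1 : R)) =
      AddMonoidAlgebra.mapDomainAlgHom R R (Finsupp.linearCombination ℕ g).toAddMonoidHom := by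
  refine algHom_ext fun a => ?_
  rw [aeval_X, AddMonoidAlgebra.mapDomainAlgHom_apply, X, monomial]
  simp

/-- The conformal order `u ⊑ w` of Graver bases. -/
def ConformalLE (u w : A → ℤ) : Prop :=
  ∀ a, (u a).toNat ≤ (w a).toNat ∧ (-u a).toNat ≤ (-w a).toNat

variable [Fintype A]

theorem aeval_prod_X_pow {R : Type*} [CommSemiring R] [AddCommMonoid G] (g : A → G)
    (n : A → ℕ) :
    aeval (fun a => AddMonoidAlgebra.single (g a) (1 : R)) (∏ a, (X a : MvPolynomial A R) ^ n a) =
      AddMonoidAlgebra.single (∑ a, n a • g a : G) 1 := by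
  simp only [map_prod, map_pow, aeval_X, AddMonoidAlgebra.single_pow, one_pow,
    AddMonoidAlgebra.prod_single, Finset.prod_const_one]

theorem sum_natAbs_sub_lt_of_conformalLE {u w : A → ℤ} (h : ConformalLE u w) (hu : u ≠ 0) :
    ∑ a, ((w - u) a).natAbs < ∑ a, (w a).natAbs := by
  obtain ⟨a₀, ha₀⟩ := Function.ne_iff.1 hu
  refine Finset.sum_lt_sum (fun a _ => ?_) ⟨a₀, Finset.mem_univ _, ?_⟩
  · have := h a
    simp only [Pi.sub_apply]
    omega
  · have := h a₀
    simp only [Pi.sub_apply, Pi.zero_apply] at ha₀ ⊢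
    omega

variable {k : Type} [Field k]

theorem binomial_zero : binomial k (0 : A → ℤ) = 0 := by
  simp [binomial]

theorem binomial_eq_of_conformalLE {u w : A → ℤ} (h : ConformalLE u w) :
    binomial k w = (∏ a, X a ^ ((w - u) a).toNat) * binomial k u +
      (∏ a, X a ^ (-u a).toNat) * binomial k (w - u) := by
  have hpos : ∏ a, (X a : MvPolynomial A k) ^ (w a).toNat =
      (∏ a, X a ^ ((w - u) a).toNat) * ∏ a, X a ^ (u a).toNat := by
    rw [← Finset.prod_mul_distrib]
    refine Finset.prod_congr rfl fun a _ => ?_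
    have := h a
    rw [← pow_add, Pi.sub_apply]
    congr 1
    omega
  have hneg : ∏ a, (X a : MvPolynomial A k) ^ (-w a).toNat =
      (∏ a, X a ^ (-u a).toNat) * ∏ a, X a ^ (-(w - u) a).toNat := by
    rw [← Finset.prod_mul_distrib]
    refine Finset.prod_congr rfl fun a _ => ?_
    have := h a
    rw [← pow_add, Pi.sub_apply]
    congr 1
    omega
  rw [binomial, binomial, binomial, hpos, hneg]
  ring

theorem monomial_one_sub_monomial_one (x y : A →₀ ℕ) :
    monomial x (1 : k) - monomial y 1 =
      (∏ a, X a ^ min (x a) (y a)) * binomial k (fun a => (x a : ℤ) - y a) := by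
  have hmon : ∀ z : A →₀ ℕ, monomial z (1 : k) = ∏ a, X a ^ z a := fun z => by
    rw [monomial_eq, Finsupp.prod_fintype _ _ fun a => pow_zero _, C_1, one_mul]
  rw [binomial, mul_sub, ← Finset.prod_mul_distrib, ← Finset.prod_mul_distrib, hmon, hmon]
  congr 1 <;> refine Finset.prod_congr rfl fun a _ => ?_ <;> rw [← pow_add] <;> congr 1 <;> omega

theorem aeval_binomial_eq_zero [AddCommGroup G] (g : A → G) {u : A → ℤ}
    (hu : ∑ a, u a • g a = 0) :
    aeval (fun a => AddMonoidAlgebra.single (g a) (1 : k)) (binomial k u) = 0 := by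
  rw [binomial, map_sub, aeval_prod_X_pow, aeval_prod_X_pow, sub_eq_zero]
  congr 1
  rw [← sub_eq_zero, ← Finset.sum_sub_distrib, ← hu]
  refine Finset.sum_congr rfl fun a _ => ?_
  rw [← natCast_zsmul, ← natCast_zsmul, ← sub_smul, Int.toNat_sub_toNat_neg]

theorem ker_aeval_single_le_span_binomial [AddCommGroup G] (g : A → G) :
    RingHom.ker (aeval (fun a => AddMonoidAlgebra.single (g a) (1 : k))).toRingHom ≤
      Ideal.span {p | ∃ w : A → ℤ, ∑ a, w a • g a = 0 ∧ p = binomial k w} := by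
  intro p hp
  rw [RingHom.mem_ker, AlgHom.toRingHom_eq_coe, RingHom.coe_coe, aeval_single_eq_mapDomainAlgHom,
    AddMonoidAlgebra.mapDomainAlgHom_apply] at hp
  have hspan := Submodule.span_le_restrictScalars k (MvPolynomial A k) _
    (AddMonoidAlgebra.ker_mapDomainLinearMap_le_span _ (LinearMap.mem_ker.2 hp))
  refine Ideal.span_le.2 ?_ hspan
  rintro _ ⟨x, y, hxy, rfl⟩
  have hker : ∑ a, ((x a : ℤ) - y a) • g a = 0 := by
    simp only [LinearMap.toAddMonoidHom_coe, Finsupp.linearCombination_apply] at hxy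
    rw [Finsupp.sum_fintype _ _ (by simp), Finsupp.sum_fintype _ _ (by simp)] at hxy
    simp only [sub_smul, natCast_zsmul, Finset.sum_sub_distrib, hxy, sub_self]
  change monomial x 1 - monomial y 1 ∈ _
  rw [monomial_one_sub_monomial_one]
  exact Ideal.mul_mem_left _ _ (Ideal.subset_span ⟨_, hker, rfl⟩)

end Binomial

section DoubleQuiver

variable {V A : Type} (s t : A → V)

theorem esrc_erev (f : A ⊕ A) : esrc s t (erev f) = etgt s t f := by
  cases f <;> rfl

theorem isNonorientedCycle_of_forall_chain (x : ℕ → A ⊕ A) (m : ℕ)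
    (hchain : ∀ i, etgt s t (x i) = esrc s t (x (i + 1)) ∧ x (i + 1) ≠ erev (x i))
    (hclose : etgt s t (x m) = esrc s t (x 0)) (hback : x 0 ≠ erev (x m)) :
    IsNonorientedCycle s t (x 0) ((List.range m).map fun i => x (i + 1)) := by
  have hlast : (x 0 :: (List.range m).map fun i => x (i + 1)).getLast (List.cons_ne_nil _ _) =
      x m := by
    simp only [List.cons_map_range_eq_map_range_succ, List.getLast_map, List.getLast_range,
      Nat.add_sub_cancel]
  refine ⟨?_, hlast ▸ hclose, fun _ => hlast ▸ hback⟩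
  show List.IsChain _ _
  rw [List.cons_map_range_eq_map_range_succ, List.isChain_map, List.isChain_range]
  exact fun i _ => hchain i

theorem exists_primitive_cycle_of_forall_exists_next [Finite V] (P : A ⊕ A → Prop)
    (hP : ∀ f, P f → ¬P (erev f)) (hnext : ∀ f, P f → ∃ g, P g ∧ esrc s t g = etgt s t f)
    {f₀ : A ⊕ A} (hf₀ : P f₀) :
    ∃ e l, IsNonorientedCycle s t e l ∧ IsPrimitive s t e l ∧ ∀ f ∈ e :: l, P f := by
  have : Nonempty (A ⊕ A) := ⟨f₀⟩
  set W : Set V := {v | ∃ g, P g ∧ esrc s t g = v}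
  -- The next edge depends only on the current vertex, so a periodic orbit is primitive.
  choose! out hout using fun v (hv : v ∈ W) => hv
  set σ : V → V := fun v => etgt s t (out v)
  have hσ : Set.MapsTo σ W W := fun v hv => hnext _ (hout v hv).1
  obtain ⟨i, hi⟩ := Function.exists_iterate_mem_periodicPts σ (esrc s t f₀)
  set v := σ^[i] (esrc s t f₀)
  have hW : ∀ j, σ^[j] v ∈ W := fun j => hσ.iterate j (hσ.iterate i ⟨f₀, hf₀, rfl⟩)
  set x : ℕ → A ⊕ A := fun j => out (σ^[j] v)
  have hxP : ∀ j, P (x j) := fun j => (hout _ (hW j)).1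
  have hxsrc : ∀ j, esrc s t (x j) = σ^[j] v := fun j => (hout _ (hW j)).2
  have hxtgt : ∀ j, etgt s t (x j) = σ^[j + 1] v :=
    fun j => (Function.iterate_succ_apply' σ j v).symm
  obtain ⟨m, hm⟩ := Nat.exists_eq_add_one_of_ne_zero
    (Function.minimalPeriod_pos_of_mem_periodicPts hi).ne'
  have hcycle := isNonorientedCycle_of_forall_chain s t x m
    (fun j => ⟨by rw [hxtgt, hxsrc], fun h => hP _ (hxP j) (h ▸ hxP (j + 1))⟩)
    (by rw [hxtgt, hxsrc, ← hm, Function.iterate_minimalPeriod, Function.iterate_zero_apply])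
    (fun h => hP _ (hxP m) (h ▸ hxP 0))
  refine ⟨_, _, hcycle, ?_, ?_⟩
  · rw [IsPrimitive, List.cons_map_range_eq_map_range_succ, List.map_map]
    refine List.Nodup.map_on (fun j hj j' hj' h => ?_) List.nodup_range
    simp only [List.mem_range, ← hm] at hj hj'
    exact Function.iterate_injOn_Iio_minimalPeriod hj hj' (by simpa [hxsrc] using h)
  · rw [List.cons_map_range_eq_map_range_succ]
    rintro _ hf
    obtain ⟨j, -, rfl⟩ := List.mem_map.1 hf
    exact hxP j

def edgeWeight (w : A → ℤ) : A ⊕ A → ℤ := Sum.elim w (-w)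

theorem edgeWeight_erev (w : A → ℤ) (f : A ⊕ A) : edgeWeight w (erev f) = -edgeWeight w f := by
  cases f <;> simp [edgeWeight, erev]

section Incidence

variable [DecidableEq V]

def incidence (a : A) : V → ℤ := Pi.single (t a) 1 - Pi.single (s a) 1

def edgeVector (f : A ⊕ A) : V → ℤ := Pi.single (etgt s t f) 1 - Pi.single (esrc s t f) 1

theorem sum_map_edgeVector_of_isChain {e : A ⊕ A} {l : List (A ⊕ A)}
    (h : List.IsChain (fun f g => etgt s t f = esrc s t g ∧ g ≠ erev f) (e :: l)) :
    ((e :: l).map (edgeVector s t)).sum =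
      Pi.single (etgt s t ((e :: l).getLast (List.cons_ne_nil e l))) 1 -
        Pi.single (esrc s t e) 1 := by
  induction l generalizing e with
  | nil => simp [edgeVector]
  | cons f l ih =>
    rw [List.isChain_cons_cons] at h
    rw [List.map_cons, List.sum_cons, ih h.2, List.getLast_cons (List.cons_ne_nil f l),
      edgeVector, h.1.1]
    abel

variable [Fintype A]

theorem sum_edgeWeight_out_eq_zero {w : A → ℤ} (hw : ∑ a, w a • incidence s t a = 0) (v : V) :
    ∑ g with esrc s t g = v, edgeWeight w g = 0 := by
  have hv := congrFun hw v
  simp only [Finset.sum_apply, Pi.smul_apply, incidence, Pi.sub_apply, Pi.single_apply,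
    Pi.zero_apply, smul_eq_mul] at hv
  rw [Finset.sum_filter, Fintype.sum_sum_type, ← Finset.sum_add_distrib, ← neg_eq_zero,
    ← Finset.sum_neg_distrib]
  refine (Finset.sum_congr rfl fun a _ => ?_).trans hv
  by_cases hs : s a = v <;> by_cases ht : t a = v <;>
    simp [esrc, edgeWeight, hs, ht, eq_comm (a := v)]

theorem exists_edgeWeight_pos_out {w : A → ℤ} (hw : ∑ a, w a • incidence s t a = 0)
    {f : A ⊕ A} (hf : 0 < edgeWeight w f) :
    ∃ g, 0 < edgeWeight w g ∧ esrc s t g = etgt s t f := by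
  by_contra! hout
  have hzero := (Finset.sum_eq_zero_iff_of_nonpos fun g hg =>
    not_lt.1 fun h => hout g h (Finset.mem_filter.1 hg).2).1
    (sum_edgeWeight_out_eq_zero s t hw (etgt s t f)) (erev f) (by simp [esrc_erev])
  rw [edgeWeight_erev] at hzero
  omega

end Incidence

variable [DecidableEq A]

theorem cycVec_cons (f : A ⊕ A) (c : List (A ⊕ A)) :
    cycVec (f :: c) = cycVec [f] + cycVec c := by
  funext a
  simp only [cycVec, List.count_cons, List.count_nil, Pi.add_apply]
  push_cast
  ring

theorem cycVec_conformalLE {w : A → ℤ} {c : List (A ⊕ A)} (hc : c.Nodup)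
    (hpos : ∀ f ∈ c, 0 < edgeWeight w f) : ConformalLE (cycVec c) w := by
  intro a
  have hl := List.nodup_iff_count_le_one.1 hc (Sum.inl a)
  have hr := List.nodup_iff_count_le_one.1 hc (Sum.inr a)
  have hl' : 0 < c.count (Sum.inl a) → 0 < w a := fun h => hpos _ (List.count_pos_iff.1 h)
  have hr' : 0 < c.count (Sum.inr a) → w a < 0 := fun h => by
    simpa [edgeWeight] using hpos _ (List.count_pos_iff.1 h)
  simp only [cycVec]
  omega

theorem cycVec_ne_zero {w : A → ℤ} {c : List (A ⊕ A)} (hpos : ∀ f ∈ c, 0 < edgeWeight w f)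
    (hc : c ≠ []) : cycVec c ≠ 0 := by
  intro h0
  have hiff : ∀ a, Sum.inl a ∈ c ↔ Sum.inr a ∈ c := fun a => by
    have := congrFun h0 a
    simp only [cycVec, Pi.zero_apply] at this
    rw [← List.count_pos_iff, ← List.count_pos_iff]
    omega
  have hboth : ∀ a, Sum.inr a ∈ c → False := fun a hr => by
    have := hpos _ hr
    have := hpos _ ((hiff a).2 hr)
    simp only [edgeWeight, Sum.elim_inl, Sum.elim_inr, Pi.neg_apply] at *
    omega
  obtain ⟨f, hf⟩ := List.exists_mem_of_ne_nil c hc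
  rcases f with a | a
  · exact hboth a ((hiff a).1 hf)
  · exact hboth a hf

variable [Fintype A] (k : Type) [Field k]

def primitiveCycleBinomials : Set (MvPolynomial A k) :=
  {p | ∃ (e : A ⊕ A) (l : List (A ⊕ A)), IsNonorientedCycle s t e l ∧ IsPrimitive s t e l ∧
    p = binomial (A := A) k (cycVec (e :: l))}

variable [DecidableEq V]

theorem sum_cycVec_singleton_smul_incidence (f : A ⊕ A) :
    ∑ a, cycVec [f] a • incidence s t a = edgeVector s t f := by
  cases f <;> simp [cycVec, incidence, edgeVector, esrc, etgt, List.count_singleton]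

theorem sum_cycVec_smul_incidence (c : List (A ⊕ A)) :
    ∑ a, cycVec c a • incidence s t a = (c.map (edgeVector s t)).sum := by
  induction c with
  | nil => simp [cycVec]
  | cons f c ih =>
    rw [cycVec_cons, List.map_cons, List.sum_cons, ← ih, ← sum_cycVec_singleton_smul_incidence,
      ← Finset.sum_add_distrib]
    simp only [Pi.add_apply, add_smul]

theorem sum_cycVec_smul_incidence_eq_zero {e : A ⊕ A} {l : List (A ⊕ A)}
    (h : IsNonorientedCycle s t e l) : ∑ a, cycVec (e :: l) a • incidence s t a = 0 := by
  rw [sum_cycVec_smul_incidence, sum_map_edgeVector_of_isChain s t h.1, h.2.1, sub_self]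

theorem exists_primitive_cycle_conformalLE [Finite V] {w : A → ℤ}
    (hw : ∑ a, w a • incidence s t a = 0) (hw0 : w ≠ 0) :
    ∃ e l, IsNonorientedCycle s t e l ∧ IsPrimitive s t e l ∧
      ConformalLE (cycVec (e :: l)) w ∧ cycVec (e :: l) ≠ 0 := by
  obtain ⟨a, ha⟩ := Function.ne_iff.1 hw0
  obtain ⟨f₀, hf₀⟩ : ∃ f₀, 0 < edgeWeight w f₀ := by
    rcases ha.lt_or_gt with h | h
    · exact ⟨Sum.inr a, by simpa [edgeWeight] using h⟩
    · exact ⟨Sum.inl a, h⟩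
  obtain ⟨e, l, hcyc, hprim, hpos⟩ := exists_primitive_cycle_of_forall_exists_next s t
    (0 < edgeWeight w ·) (fun f hf h => by rw [edgeWeight_erev] at h; omega)
    (fun _ hf => exists_edgeWeight_pos_out s t hw hf) hf₀
  exact ⟨e, l, hcyc, hprim, cycVec_conformalLE (hprim.of_map _) hpos,
    cycVec_ne_zero hpos (List.cons_ne_nil e l)⟩

theorem binomial_mem_span_primitiveCycleBinomials [Finite V] {w : A → ℤ}
    (hw : ∑ a, w a • incidence s t a = 0) :
    binomial k w ∈ Ideal.span (primitiveCycleBinomials s t k) := by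
  induction hn : ∑ a, (w a).natAbs using Nat.strong_induction_on generalizing w with
  | _ n ih =>
  obtain rfl | hw0 := eq_or_ne w 0
  · rw [binomial_zero]
    exact zero_mem _
  obtain ⟨e, l, hcyc, hprim, hconf, hne⟩ := exists_primitive_cycle_conformalLE s t hw hw0
  have hker : ∑ a, (w - cycVec (e :: l)) a • incidence s t a = 0 := by
    simp only [Pi.sub_apply, sub_smul, Finset.sum_sub_distrib, hw,
      sum_cycVec_smul_incidence_eq_zero s t hcyc, sub_self]
  rw [binomial_eq_of_conformalLE hconf]
  exact add_mem (Ideal.mul_mem_left _ _ (Ideal.subset_span ⟨e, l, hcyc, hprim, rfl⟩))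
    (Ideal.mul_mem_left _ _ (ih _ (hn ▸ sum_natAbs_sub_lt_of_conformalLE hconf hne) hker rfl))

theorem span_primitiveCycleBinomials_le_ker :
    Ideal.span (primitiveCycleBinomials s t k) ≤
      RingHom.ker (aeval fun a => AddMonoidAlgebra.single (incidence s t a) (1 : k)).toRingHom := by
  rw [Ideal.span_le]
  rintro _ ⟨e, l, hcyc, -, rfl⟩
  exact aeval_binomial_eq_zero _ (sum_cycVec_smul_incidence_eq_zero s t hcyc)

end DoubleQuiver

end QuiverCycles8

open QuiverCycles8 in
theorem toric_ideal_generated_by_primitive_cycles_general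
    {V A : Type} [Fintype V] [Fintype A] [DecidableEq V] [DecidableEq A]
    (s t : A → V)
    (k : Type) [Field k] :
    RingHom.ker (MvPolynomial.aeval (R := k)
        (fun a : A => AddMonoidAlgebra.single (Pi.single (t a) 1 - Pi.single (s a) 1 : V → ℤ)
          (1 : k))).toRingHom =
      Ideal.span {p : MvPolynomial A k | ∃ (e : A ⊕ A) (l : List (A ⊕ A)),
        IsNonorientedCycle s t e l ∧ IsPrimitive s t e l ∧
        p = binomial (A := A) k (cycVec (e :: l))} := by
  refine le_antisymm ?_ (span_primitiveCycleBinomials_le_ker s t k)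
  refine (ker_aeval_single_le_span_binomial (incidence s t)).trans (Ideal.span_le.2 ?_)
  rintro _ ⟨w, hw, rfl⟩
  exact binomial_mem_span_primitiveCycleBinomials s t k hw

open QuiverCycles8 in
/-- for a finite quiver `Q` without oriented cycles, the toric ideal `I_{C_Q}`,
i.e. the kernel of `k[S_α] → k[T_i, T_i⁻¹]`, `S_α ↦ T_{t α} T_{s α}⁻¹` (the Laurent polynomial
ring being realized as the group algebra of `ℤ^{Q_0}`), is generated by the binomials
`S^{u⁺} - S^{u⁻}` where `u` runs through the vectors of primitive nonoriented cycles of `Q`. -/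
theorem toric_ideal_generated_by_primitive_cycles
    {V A : Type} [Fintype V] [Fintype A] [DecidableEq V] [DecidableEq A]
    (s t : A → V)
    (hacyc : ∀ v : V, ¬ Relation.TransGen (fun u w : V => ∃ a : A, s a = u ∧ t a = w) v v)
    (k : Type) [Field k] :
    RingHom.ker (MvPolynomial.aeval (R := k)
        (fun a : A => AddMonoidAlgebra.single (Pi.single (t a) 1 - Pi.single (s a) 1 : V → ℤ)
          (1 : k))).toRingHom =
      Ideal.span {p : MvPolynomial A k | ∃ (e : A ⊕ A) (l : List (A ⊕ A)),
        IsNonorientedCycle s t e l ∧ IsPrimitive s t e l ∧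
        p = binomial (A := A) k (cycVec (e :: l))} :=
  toric_ideal_generated_by_primitive_cycles_general s t k
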